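/- Suppose R is F-pure and F-finite. Then every Φ(E)-special ideal of R is fully Φ(E)-special. -/

import Mathlib

open TensorProduct IsLocalRing DirectSum

universe u v

/-! ### Frobenius twists and base change -/

/-- `R` viewed as an algebra over itself via the `n`-th power of the Frobenius
endomorphism; this plays the role of `R^{(n)}` (an `R`-module via `r • s = r ^ p ^ n * s`). -/
def FrobAlg (R : Type u) (p n : ℕ) [CommRing R] [Fact p.Prime] [CharP R p] : Type u := R

namespace FrobAlg

variable (R : Type u) (p n : ℕ) [CommRing R] [Fact p.Prime] [CharP R p]

instance : CommRing (FrobAlg R p n) := inferInstanceAs (CommRing R)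

instance : Algebra R (FrobAlg R p n) :=
  RingHom.toAlgebra (show R →+* FrobAlg R p n from (frobenius R p) ^ n)

/-- The canonical identification of `R` with the underlying set of `R^{(n)}`. -/
def of (r : R) : FrobAlg R p n := r

end FrobAlg

/-- The Frobenius base change `R^{(n)} ⊗_R M` of an `R`-module `M` along the `n`-th
power of the Frobenius endomorphism of `R`. -/
def FrobBC (R : Type u) (p n : ℕ) [CommRing R] [Fact p.Prime] [CharP R p]
    (M : Type v) [AddCommGroup M] [Module R M] : Type (max u v) :=
  FrobAlg R p n ⊗[R] M

namespace FrobBC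

variable (R : Type u) (p n : ℕ) [CommRing R] [Fact p.Prime] [CharP R p]
  (M : Type v) [AddCommGroup M] [Module R M]

noncomputable instance : AddCommGroup (FrobBC R p n M) :=
  inferInstanceAs (AddCommGroup (FrobAlg R p n ⊗[R] M))

/-- The `R`-module structure on `R^{(n)} ⊗_R M` given by multiplication on the first
factor. -/
noncomputable instance : Module R (FrobBC R p n M) :=
  inferInstanceAs (Module (FrobAlg R p n) (FrobAlg R p n ⊗[R] M))

variable {M}

/-- The elementary tensor `r ⊗ m` in `R^{(n)} ⊗_R M`. -/
noncomputable def tmul (r : R) (m : M) : FrobBC R p n M := FrobAlg.of R p n r ⊗ₜ[R] m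

end FrobBC

/-- `R` is `F`-pure if for every `R`-module `M` the natural map
`M → R^{(1)} ⊗_R M`, `m ↦ 1 ⊗ m`, is injective. -/
def IsFPure (R : Type u) (p : ℕ) [CommRing R] [Fact p.Prime] [CharP R p] : Prop :=
  ∀ (M : Type u) [AddCommGroup M] [Module R M],
    Function.Injective fun m : M => FrobBC.tmul R p 1 (1 : R) m

/-- An ideal `𝔞` of `R` is fully `Φ(E)`-special if for every `n ≥ 1`, every `r ∈ 𝔞` and
every `e ∈ (0 :_E 𝔞)`, the element `r ⊗ e` is zero in `R^{(n)} ⊗_R E`. -/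
def IsFullyPhiSpecial (R : Type u) (p : ℕ) [CommRing R] [Fact p.Prime] [CharP R p]
    (E : Type v) [AddCommGroup E] [Module R E] (𝔞 : Ideal R) : Prop :=
  ∀ n : ℕ, 1 ≤ n → ∀ r ∈ 𝔞, ∀ e : E, (∀ a ∈ 𝔞, a • e = 0) → FrobBC.tmul R p n r e = 0

/-! ### The module `Φ(E)` and the Frobenius shift -/

/-- The Frobenius `a ↦ a ^ p`, as an `R`-algebra map `R^{(n)} → R^{(n+1)}`. -/
def frobStepAlg (R : Type u) (p n : ℕ) [CommRing R] [Fact p.Prime] [CharP R p] :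
    FrobAlg R p n →ₐ[R] FrobAlg R p (n + 1) :=
  { (show FrobAlg R p n →+* FrobAlg R p (n + 1) from frobenius R p) with
    commutes' := fun r => by
      show frobenius R p (((frobenius R p) ^ n) r) = ((frobenius R p) ^ (n + 1)) r
      rw [pow_succ']
      rfl }

/-- The Frobenius `a ↦ a ^ p`, as an `R`-linear map `R^{(n)} → R^{(n+1)}`. -/
def frobStep (R : Type u) (p n : ℕ) [CommRing R] [Fact p.Prime] [CharP R p] :
    FrobAlg R p n →ₗ[R] FrobAlg R p (n + 1) :=
  (frobStepAlg R p n).toLinearMap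

/-- The graded module `Φ(E) = ⊕_{n ≥ 0} R^{(n)} ⊗_R E`. -/
def PhiModule (R : Type u) (p : ℕ) [CommRing R] [Fact p.Prime] [CharP R p]
    (E : Type v) [AddCommGroup E] [Module R E] : Type (max u v) :=
  ⨁ n : ℕ, FrobBC R p n E

namespace PhiModule

variable (R : Type u) (p : ℕ) [CommRing R] [Fact p.Prime] [CharP R p]
  (E : Type v) [AddCommGroup E] [Module R E]

noncomputable instance : AddCommGroup (PhiModule R p E) :=
  inferInstanceAs (AddCommGroup (⨁ n : ℕ, FrobBC R p n E))

noncomputable instance : Module R (PhiModule R p E) :=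
  inferInstanceAs (Module R (⨁ n : ℕ, FrobBC R p n E))

/-- The inclusion of the `n`-th component into `Φ(E)`. -/
noncomputable def of (n : ℕ) (g : FrobBC R p n E) : PhiModule R p E :=
  DirectSum.of (fun m : ℕ => FrobBC R p m E) n g

/-- The Frobenius-semilinear shift operator `x` on `Φ(E)`, sending an element
`r ⊗ e` of the `n`-th component to `r ^ p ⊗ e` in the `(n+1)`-th component. -/
noncomputable def shift : PhiModule R p E →+ PhiModule R p E :=
  DirectSum.toAddMonoid fun n =>
    (DirectSum.of (fun m : ℕ => FrobBC R p m E) (n + 1)).comp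
      (TensorProduct.map (frobStep R p n) (LinearMap.id (R := R) (M := E))).toAddMonoidHom

end PhiModule

/-- An ideal `𝔞` of `R` is `Φ(E)`-special if it is the annihilator of an
`R[x,f]`-submodule of `Φ(E)`, i.e. of an `R`-submodule stable under the shift operator. -/
def IsPhiSpecial (R : Type u) (p : ℕ) [CommRing R] [Fact p.Prime] [CharP R p]
    (E : Type v) [AddCommGroup E] [Module R E] (𝔞 : Ideal R) : Prop :=
  ∃ N : Submodule R (PhiModule R p E),
    (∀ g ∈ N, PhiModule.shift R p E g ∈ N) ∧ 𝔞 = N.annihilator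

/-! ### Further notions -/

/-- The `q`-th bracket (Frobenius) power `I^{[q]}` of an ideal: the ideal generated by
the `q`-th powers of the elements of `I`. -/
def Ideal.bracketPow {S : Type u} [CommRing S] (I : Ideal S) (q : ℕ) : Ideal S :=
  Ideal.span ((fun x => x ^ q) '' (I : Set S))

/-- A Noetherian local ring is regular if its maximal ideal can be generated by
`dim S` elements. -/
def IsRegularLocal (S : Type u) [CommRing S] [IsLocalRing S] : Prop :=
  ∃ s : Finset S, (s.card : WithBot (WithTop ℕ)) = ringKrullDim S ∧
    Ideal.span (s : Set S) = maximalIdeal S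

/-- An ideal `𝔟` of `R` is uniformly `F`-compatible if for every `n ≥ 1` and every
`R`-linear map `φ : R^{(n)} → R` one has `φ(𝔟) ⊆ 𝔟`. -/
def UniformlyFCompatible (R : Type u) (p : ℕ) [CommRing R] [Fact p.Prime] [CharP R p]
    (𝔟 : Ideal R) : Prop :=
  ∀ n : ℕ, 1 ≤ n → ∀ φ : FrobAlg R p n →ₗ[R] R, ∀ b ∈ 𝔟, φ (FrobAlg.of R p n b) ∈ 𝔟

/-- `R` is `F`-finite if `R^{(1)}` is a finitely generated `R`-module. -/
def IsFFinite (R : Type u) (p : ℕ) [CommRing R] [Fact p.Prime] [CharP R p] : Prop :=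
  Module.Finite R (FrobAlg R p 1)

/-- A Noetherian local ring `T` of characteristic `p` is strongly `F`-regular in the
sense of Lyubeznik and Smith if the tight closure of `0` in the injective envelope of
the residue field of `T` is zero. -/
def IsStronglyFRegularLS (T : Type u) (p : ℕ) [CommRing T] [IsLocalRing T]
    [Fact p.Prime] [CharP T p] : Prop :=
  ∀ (ET : Type u) [AddCommGroup ET] [Module T ET],
    Module.Injective T ET →
    ∀ ι : (T ⧸ maximalIdeal T) →ₗ[T] ET, Function.Injective ι →
    (∀ N : Submodule T ET, N ⊓ LinearMap.range ι = ⊥ → N = ⊥) →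
    ∀ m : ET,
      (∃ c : T, (∀ P ∈ minimalPrimes T, c ∉ P) ∧
        ∃ N₀ : ℕ, ∀ n : ℕ, N₀ ≤ n → FrobBC.tmul T p n c m = 0) → m = 0

/-- `Q` is a minimal primary decomposition of the ideal `𝔄`: the `Q i` are primary,
`𝔄` is their intersection, their radicals are pairwise distinct, and none of them
contains the intersection of the others. -/
def IsMinimalPrimaryDecomposition {S : Type u} [CommRing S] (𝔄 : Ideal S) {t : ℕ}
    (Q : Fin t → Ideal S) : Prop :=
  𝔄 = ⨅ i, Q i ∧ (∀ i, (Q i).IsPrimary) ∧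
    (Function.Injective fun i => (Q i).radical) ∧
    ∀ i, ¬ (⨅ j, ⨅ (_ : j ≠ i), Q j) ≤ Q i

/-! If `N ⊆ Φ(E)` is stable under `x`, then so it is under `x ^ n`. For an `R`-linear
`φ : R^{(n)} → R`, the map `φ ⊗ id : R^{(j+n)} ⊗ E → R^{(j)} ⊗ E` sends the
degree-`(j+n)` part of `r · x ^ n g` to `φ(r) · g_j`. Hence `ann N` is stable under every
such `φ`, and for `r ∈ 𝔞 = ann N` and `e ∈ (0 :_E 𝔞)` all the elements `φ(r) e` vanish.
As `R^{(n)}` is finitely presented (`R` is F-finite and Noetherian) and `E` is injective,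
the natural map `R^{(n)} ⊗ E → Hom_R(Hom_R(R^{(n)}, R), E)` is injective, so `r ⊗ e = 0`. -/

theorem Function.Exact.exists_comp_eq_of_comp_eq_zero {R : Type*} [CommRing R] {M N P Q : Type*}
    [AddCommGroup M] [Module R M] [AddCommGroup N] [Module R N] [AddCommGroup P] [Module R P]
    [AddCommGroup Q] [Module R Q] {g : M →ₗ[R] N} {f : N →ₗ[R] P}
    (hgf : Function.Exact g f) (hf : Function.Surjective f) {w : N →ₗ[R] Q}
    (hw : w ∘ₗ g = 0) : ∃ φ : P →ₗ[R] Q, φ ∘ₗ f = w := by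
  refine ⟨(LinearMap.range g).liftQ w ?_ ∘ₗ (hgf.linearEquivOfSurjective hf).symm.toLinearMap,
    ?_⟩
  · rintro _ ⟨x, rfl⟩
    exact LinearMap.congr_fun hw x
  · ext x
    simp

section InjectiveDuality

variable {R : Type u} [CommRing R] {E : Type v} [AddCommGroup E] [Module R E]
  [Small.{v} R] [Module.Injective R E]

theorem Module.Injective.exists_comp_eq_of_ker_le {X Y : Type*} [AddCommGroup X] [Module R X]
    [AddCommGroup Y] [Module R Y] (T : X →ₗ[R] Y) (θ : X →ₗ[R] E)
    (h : LinearMap.ker T ≤ LinearMap.ker θ) : ∃ ψ : Y →ₗ[R] E, ψ ∘ₗ T = θ := by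
  obtain ⟨ψ, hψ⟩ := Module.Injective.extension_property R E _ _
    ((LinearMap.ker T).liftQ T le_rfl)
    (LinearMap.ker_eq_bot.mp (Submodule.ker_liftQ_eq_bot _ _ _ le_rfl))
    ((LinearMap.ker T).liftQ θ h)
  exact ⟨ψ, LinearMap.ext fun x => LinearMap.congr_fun hψ (Submodule.Quotient.mk x)⟩

variable {M : Type*} [AddCommGroup M] [Module R M] [Module.FinitePresentation R M]

theorem TensorProduct.tmul_eq_zero_of_forall_dual_smul_eq_zero {m : M} {e : E}
    (h : ∀ φ : Module.Dual R M, φ m • e = 0) : m ⊗ₜ[R] e = 0 := by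
  obtain ⟨n, k, f, g, hf, hgf⟩ := Module.FinitePresentation.exists_fin' R M
  obtain ⟨c, rfl⟩ := hf m
  -- `w ↦ w c • e` kills every functional vanishing on the relations `range g`,
  -- so it factors through `g.dualMap` by injectivity of `E`.
  have hker : LinearMap.ker g.dualMap ≤ LinearMap.ker ((LinearMap.applyₗ c).smulRight e) := by
    intro w hw
    obtain ⟨φ, rfl⟩ := hgf.exists_comp_eq_of_comp_eq_zero hf hw
    exact h φ
  obtain ⟨ψ, hψ⟩ := Module.Injective.exists_comp_eq_of_ker_le _ _ hker
  have hproj (i : Fin n) :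
      g.dualMap (LinearMap.proj i) = ∑ j, g (Pi.single j 1) i • LinearMap.proj j := by
    ext j
    simp [Pi.single_apply]
  have hce (i : Fin n) : c i • e = ∑ j, g (Pi.single j 1) i • ψ (LinearMap.proj j) := by
    simpa [hproj] using (LinearMap.congr_fun hψ (LinearMap.proj i)).symm
  have hf_apply (x : Fin n → R) : f x = ∑ i, x i • f (Pi.single i 1) := by
    conv_lhs => rw [← Finset.univ_sum_single x]
    simp only [map_sum, ← map_smul, ← Pi.single_smul', smul_eq_mul, mul_one]
  have hrel (j : Fin k) : ∑ i, g (Pi.single j 1) i • f (Pi.single i 1) = 0 := by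
    rw [← hf_apply, hgf.apply_apply_eq_zero]
  rw [hf_apply, TensorProduct.sum_tmul]
  simp_rw [TensorProduct.smul_tmul]
  exact sum_tmul_eq_zero_of_vanishesTrivially R (.of_fintype _ _ hce hrel)

end InjectiveDuality

theorem IsFFinite.finite_frobAlg {R : Type u} {p : ℕ} [CommRing R] [Fact p.Prime] [CharP R p]
    (hFF : IsFFinite R p) (n : ℕ) : Module.Finite R (FrobAlg R p n) := by
  suffices ((frobenius R p) ^ n).Finite from this
  induction n with
  | zero => exact RingHom.Finite.id R
  | succ n ih => rw [pow_succ]; exact RingHom.Finite.comp ih hFF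

namespace FrobAlg

variable {R : Type u} {p : ℕ} [CommRing R] [Fact p.Prime] [CharP R p]

theorem of_surjective (n : ℕ) : Function.Surjective (of R p n) := fun x => ⟨x, rfl⟩

theorem smul_def {n : ℕ} (a : R) (x : FrobAlg R p n) : a • x = of R p n (a ^ p ^ n) * x := by
  rw [Algebra.smul_def]
  congr 1
  show (frobenius R p ^ n) a = a ^ p ^ n
  rw [← iterateFrobenius_eq_pow, iterateFrobenius_def]

variable (R p) in
def frobPow (j k : ℕ) : FrobAlg R p j →ₗ[R] FrobAlg R p (j + k) where
  toFun s := of R p (j + k) (s ^ p ^ k)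
  map_add' := fun (s t : R) => add_pow_char_pow s t p k
  map_smul' a s := by
    obtain ⟨s, rfl⟩ := of_surjective j s
    simp only [smul_def, RingHom.id_apply]
    show (a ^ p ^ j * s) ^ p ^ k = a ^ p ^ (j + k) * s ^ p ^ k
    rw [mul_pow, ← pow_mul, ← pow_add]

theorem frobPow_zero (j : ℕ) : frobPow R p j 0 = LinearMap.id := by
  ext s
  show s ^ p ^ 0 = s
  rw [pow_zero, pow_one]

theorem frobStep_eq_frobPow (j : ℕ) : frobStep R p j = frobPow R p j 1 := by
  ext s
  show s ^ p = s ^ p ^ 1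
  rw [pow_one]

theorem frobPow_one_comp_frobPow (j k : ℕ) :
    frobPow R p (j + k) 1 ∘ₗ frobPow R p j k = frobPow R p j (k + 1) := by
  ext s
  show (s ^ p ^ k) ^ p ^ 1 = s ^ p ^ (k + 1)
  rw [← pow_mul, pow_add]

/-- An `R`-linear map `φ : R^{(n)} → R` is also `R`-linear as a map `R^{(j+n)} → R^{(j)}`. -/
def twist {n : ℕ} (φ : FrobAlg R p n →ₗ[R] R) (j : ℕ) :
    FrobAlg R p (j + n) →ₗ[R] FrobAlg R p j where
  toFun x := of R p j (φ x)
  map_add' x y := map_add φ x y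
  map_smul' a x := by
    obtain ⟨x, rfl⟩ := of_surjective (j + n) x
    have h := map_smul φ (a ^ p ^ j) (of R p n x)
    rw [smul_def, ← pow_mul, ← pow_add] at h
    simp only [smul_def, RingHom.id_apply]
    exact h

/-- `φ (r * s ^ p ^ n) = s * φ r`. -/
theorem twist_comp_lsmul_comp_frobPow {n : ℕ} (φ : FrobAlg R p n →ₗ[R] R) (j : ℕ) (r : R) :
    twist φ j ∘ₗ Algebra.lsmul R R _ (of R p (j + n) r) ∘ₗ frobPow R p j n =
      Algebra.lsmul R R _ (of R p j (φ (of R p n r))) := by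
  ext s
  obtain ⟨s, rfl⟩ := of_surjective j s
  have h := map_smul φ s (of R p n r)
  rw [smul_def] at h
  show φ (of R p n (r * s ^ p ^ n)) = φ (of R p n r) * s
  rw [mul_comm r, mul_comm (φ _)]
  exact h

end FrobAlg

namespace FrobBC

variable {R : Type u} {p : ℕ} [CommRing R] [Fact p.Prime] [CharP R p]
  {M : Type v} [AddCommGroup M] [Module R M]

noncomputable def frobPow (j k : ℕ) : FrobBC R p j M →+ FrobBC R p (j + k) M :=
  (TensorProduct.map (FrobAlg.frobPow R p j k) (LinearMap.id (M := M))).toAddMonoidHom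

noncomputable def twist {n : ℕ} (φ : FrobAlg R p n →ₗ[R] R) (j : ℕ) :
    FrobBC R p (j + n) M →+ FrobBC R p j M :=
  (TensorProduct.map (FrobAlg.twist φ j) (LinearMap.id (M := M))).toAddMonoidHom

theorem frobPow_zero (j : ℕ) (h : FrobBC R p j M) : frobPow j 0 h = h := by
  show TensorProduct.map _ _ h = h
  rw [FrobAlg.frobPow_zero, TensorProduct.map_id]
  rfl

theorem frobPow_one_frobPow (j k : ℕ) (h : FrobBC R p j M) :
    frobPow (j + k) 1 (frobPow j k h) = frobPow j (k + 1) h :=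
  (TensorProduct.map_map _ _ _ _ h).trans
    (by rw [FrobAlg.frobPow_one_comp_frobPow, LinearMap.id_comp]; rfl)

theorem twist_smul_frobPow {n : ℕ} (φ : FrobAlg R p n →ₗ[R] R) (j : ℕ) (r : R)
    (h : FrobBC R p j M) : twist φ j (r • frobPow j n h) = φ (FrobAlg.of R p n r) • h := by
  have key := congrArg (LinearMap.rTensor M) (FrobAlg.twist_comp_lsmul_comp_frobPow φ j r)
  rw [LinearMap.rTensor_comp, LinearMap.rTensor_comp] at key
  exact LinearMap.congr_fun key h

end FrobBC

namespace PhiModule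

variable {R : Type u} {p : ℕ} [CommRing R] [Fact p.Prime] [CharP R p]
  {E : Type v} [AddCommGroup E] [Module R E]

variable (R p E) in
noncomputable def component (j : ℕ) : PhiModule R p E →ₗ[R] FrobBC R p j E :=
  DirectSum.component R ℕ (fun m => FrobBC R p m E) j

theorem ext_component {g g' : PhiModule R p E}
    (h : ∀ j, component R p E j g = component R p E j g') : g = g' :=
  DirectSum.ext_component R h

theorem component_of_self (i : ℕ) (u : FrobBC R p i E) : component R p E i (of R p E i u) = u :=
  DirectSum.of_eq_same (β := fun m => FrobBC R p m E) i u

theorem component_of_of_ne {i j : ℕ} (h : j ≠ i) (u : FrobBC R p i E) :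
    component R p E j (of R p E i u) = 0 :=
  DirectSum.of_eq_of_ne (β := fun m => FrobBC R p m E) i j u h

theorem shift_of (i : ℕ) (u : FrobBC R p i E) :
    shift R p E (of R p E i u) = of R p E (i + 1) (FrobBC.frobPow i 1 u) := by
  rw [FrobBC.frobPow, ← FrobAlg.frobStep_eq_frobPow]
  exact DirectSum.toAddMonoid_of (β := fun m => FrobBC R p m E) _ i u

theorem component_shift (j : ℕ) (g : PhiModule R p E) :
    component R p E (j + 1) (shift R p E g) = FrobBC.frobPow j 1 (component R p E j g) := by
  suffices (component R p E (j + 1)).toAddMonoidHom.comp (shift R p E) =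
      (FrobBC.frobPow j 1).comp (component R p E j).toAddMonoidHom from DFunLike.congr_fun this g
  refine DirectSum.addHom_ext fun i u => ?_
  show component R p E (j + 1) (shift R p E (of R p E i u)) =
    FrobBC.frobPow j 1 (component R p E j (of R p E i u))
  rw [shift_of]
  rcases eq_or_ne j i with rfl | h
  · rw [component_of_self, component_of_self]
  · rw [component_of_of_ne h, component_of_of_ne (by omega), map_zero]

theorem component_shift_iterate (j k : ℕ) (g : PhiModule R p E) :
    component R p E (j + k) ((shift R p E)^[k] g) = FrobBC.frobPow j k (component R p E j g) := by
  induction k with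
  | zero => exact (FrobBC.frobPow_zero j _).symm
  | succ k ih =>
    rw [Function.iterate_succ_apply']
    show component R p E (j + k + 1) (shift R p E ((shift R p E)^[k] g)) = _
    rw [component_shift, ih, FrobBC.frobPow_one_frobPow]

end PhiModule

section

variable {R : Type u} {p : ℕ} [CommRing R] [Fact p.Prime] [CharP R p]
  {E : Type v} [AddCommGroup E] [Module R E] {𝔞 : Ideal R}

theorem IsPhiSpecial.uniformlyFCompatible (h𝔞 : IsPhiSpecial R p E 𝔞) :
    UniformlyFCompatible R p 𝔞 := by
  obtain ⟨N, hN, rfl⟩ := h𝔞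
  intro n _ φ r hr
  rw [Submodule.mem_annihilator] at hr ⊢
  intro g hg
  have hgn : (PhiModule.shift R p E)^[n] g ∈ N := Set.MapsTo.iterate hN n hg
  refine PhiModule.ext_component fun j => ?_
  rw [map_smul, map_zero]
  calc φ (FrobAlg.of R p n r) • PhiModule.component R p E j g
      = FrobBC.twist φ j (r • FrobBC.frobPow j n (PhiModule.component R p E j g)) :=
        (FrobBC.twist_smul_frobPow φ j r _).symm
    _ = FrobBC.twist φ j (PhiModule.component R p E (j + n)
          (r • (PhiModule.shift R p E)^[n] g)) := by
        rw [map_smul (PhiModule.component R p E (j + n)), PhiModule.component_shift_iterate]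
    _ = 0 := by rw [hr _ hgn, map_zero, map_zero]

theorem UniformlyFCompatible.isFullyPhiSpecial [IsNoetherianRing R] [Small.{v} R]
    [Module.Injective R E] (hFF : IsFFinite R p) (h𝔞 : UniformlyFCompatible R p 𝔞) :
    IsFullyPhiSpecial R p E 𝔞 := by
  intro n hn r hr e he
  have := hFF.finite_frobAlg n
  have := Module.finitePresentation_of_finite R (FrobAlg R p n)
  exact TensorProduct.tmul_eq_zero_of_forall_dual_smul_eq_zero fun φ => he _ (h𝔞 n hn φ r hr)

end

theorem special_implies_fully_special_of_F_finite_general (R : Type u) [CommRing R] [IsNoetherianRing R]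
    (p : ℕ) [Fact p.Prime] [CharP R p]
    (E : Type u) [AddCommGroup E] [Module R E]
    (hE : Module.Injective R E)
    (hFF : IsFFinite R p)
    (𝔞 : Ideal R) (h𝔞 : IsPhiSpecial R p E 𝔞) :
    IsFullyPhiSpecial R p E 𝔞 :=
  have := hE
  h𝔞.uniformlyFCompatible.isFullyPhiSpecial hFF

theorem special_implies_fully_special_of_F_finite (R : Type u) [CommRing R] [IsNoetherianRing R] [IsLocalRing R]
    (p : ℕ) [Fact p.Prime] [CharP R p]
    (E : Type u) [AddCommGroup E] [Module R E]
    (hE : Module.Injective R E)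
    (ι : (R ⧸ maximalIdeal R) →ₗ[R] E) (hι : Function.Injective ι)
    (hess : ∀ N : Submodule R E, N ⊓ LinearMap.range ι = ⊥ → N = ⊥)
    (hFpure : IsFPure R p) (hFF : IsFFinite R p)
    (𝔞 : Ideal R) (h𝔞 : IsPhiSpecial R p E 𝔞) :
    IsFullyPhiSpecial R p E 𝔞 :=
  special_implies_fully_special_of_F_finite_general R p E hE hFF 𝔞 h𝔞
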